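/- arXiv:1907.08774 — 3 statements merged into one kernel-verified Lean document; each statement's English description precedes it below -/
import Mathlib

section
/- For the M/M/1 queue utility U(μ) = r·(λ/μ) − h·(λ/μ)/(μ−λ) with positive constants r, h, λ, the value μ⋆ = λ + u + √(u(u+λ)) with u = h/r is a critical point of U on the interval (λ, ∞), i.e., the derivative of U vanishes at μ⋆. -/
lemma mm1_aux (lam r h u s m : ℝ) (hlam : 0 < lam) (hr : 0 < r) (hh : 0 < h)
    (hu : u = h / r) (hs2 : s ^ 2 = u * (u + lam)) (hs0 : 0 ≤ s)
    (hm : m = lam + u + s) :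
    deriv (fun μ : ℝ => r * (lam / μ) - h * ((lam / μ) / (μ - lam))) m = 0 := by
  have hu0 : 0 < u := hu ▸ div_pos hh hr
  have hmlam : lam < m := by nlinarith
  have hm0 : m ≠ 0 := ne_of_gt (lt_trans hlam hmlam)
  have hml : m - lam ≠ 0 := sub_ne_zero.mpr hmlam.ne'
  have h1 : HasDerivAt (fun μ : ℝ => lam / μ) ((0 * m - lam * 1) / m ^ 2) m :=
    (hasDerivAt_const m lam).div (hasDerivAt_id m) hm0
  have h2 : HasDerivAt (fun μ : ℝ => μ - lam) 1 m := (hasDerivAt_id m).sub_const lam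
  have h3 : HasDerivAt (fun μ : ℝ => (lam / μ) / (μ - lam))
      ((((0 * m - lam * 1) / m ^ 2) * (m - lam) - (lam / m) * 1) / (m - lam) ^ 2) m :=
    h1.div h2 hml
  have h4 : HasDerivAt (fun μ : ℝ => r * (lam / μ) - h * ((lam / μ) / (μ - lam)))
      (r * ((0 * m - lam * 1) / m ^ 2) -
        h * ((((0 * m - lam * 1) / m ^ 2) * (m - lam) - (lam / m) * 1) / (m - lam) ^ 2)) m :=
    (h1.const_mul r).sub (h3.const_mul h)
  rw [h4.deriv]
  have hru : r * u = h := by rw [hu]; field_simp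
  have key : r * (m - lam) ^ 2 = h * (2 * m - lam) := by
    rw [hm]; linear_combination r * hs2 + (2 * u + 2 * s + lam) * hru
  have hr' : r ≠ 0 := ne_of_gt hr
  field_simp
  linear_combination (-1) * lam * key

/-- For the M/M/1 queue utility `U(μ) = r·(λ/μ) − h·(λ/μ)/(μ−λ)` with positive
constants `r, h, λ`, the point `μ⋆ = λ + u + √(u(u+λ))` with `u = h/r` is a
critical point: the derivative of `U` vanishes at `μ⋆`. -/
theorem mm1_critical_point (lam r h : ℝ) (hlam : 0 < lam) (hr : 0 < r) (hh : 0 < h) :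
    deriv (fun μ : ℝ => r * (lam / μ) - h * ((lam / μ) / (μ - lam)))
      (lam + h / r + Real.sqrt ((h / r) * (h / r + lam))) = 0 := by
  exact mm1_aux lam r h (h / r) (Real.sqrt ((h / r) * (h / r + lam))) _ hlam hr hh rfl
    (Real.sq_sqrt (by positivity)) (Real.sqrt_nonneg _) rfl
end

section
/- Suppose F : ℝⁿ → ℝ is convex, the constraint functions Q_j : ℝⁿ → ℝ (j = 1,…,J) are convex, X ⊆ ℝⁿ is convex and compact with diameter at most D_x, F is L-Lipschitz on X with L = √(C_g·C_f), and there exist x̃ ∈ X and σ > 0 with Q_j(x̃) + σ ≤ 0 for all j. Let 0 < γ < σ/2 and assume strong duality holds for the perturbed problem min{F(x) : x ∈ X, Q_j(x) + γ ≤ 0 ∀j} with optimal solution x^γ and dual optimal λ^γ ≥ 0. Then the sum of the dual multipliers satisfies Σ_j λ^γ_j ≤ 2·L·D_x/σ. -/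
/-!
Evaluate the Lagrangian of the perturbed problem at the Slater point `x̃`: strong duality gives
`F(x^γ) ≤ F(x̃) + Σ_j λ_j (Q_j(x̃) + γ) ≤ F(x̃) - (σ/2) Σ_j λ_j`, since `Q_j(x̃) + γ ≤ -σ/2`,
while `F(x̃) - F(x^γ) ≤ L D_x` by Lipschitz continuity.
-/

theorem sum_le_div_of_le_lagrangian {ι α : Type*} [Fintype ι] {f : α → ℝ} {g : ι → α → ℝ}
    {lam : ι → ℝ} {x₀ x : α} {δ M : ℝ} (hδ : 0 < δ) (hlam : ∀ j, 0 ≤ lam j)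
    (hslack : ∀ j, g j x ≤ -δ) (hgap : f x - f x₀ ≤ M)
    (hmin : f x₀ ≤ f x + ∑ j, lam j * g j x) :
    ∑ j, lam j ≤ M / δ := by
  rw [le_div_iff₀ hδ]
  calc (∑ j, lam j) * δ = ∑ j, lam j * δ := Finset.sum_mul ..
    _ ≤ ∑ j, lam j * -g j x :=
      Finset.sum_le_sum fun j _ ↦ mul_le_mul_of_nonneg_left (le_neg.mpr (hslack j)) (hlam j)
    _ = -∑ j, lam j * g j x := by simp only [mul_neg, Finset.sum_neg_distrib]
    _ ≤ M := by linarith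

theorem dual_multiplier_sum_bound_general {n J : ℕ}
    (F : EuclideanSpace ℝ (Fin n) → ℝ) (Q : Fin J → EuclideanSpace ℝ (Fin n) → ℝ)
    (X : Set (EuclideanSpace ℝ (Fin n))) (Dx L σ γ : ℝ)
    (xγ : EuclideanSpace ℝ (Fin n)) (lam : Fin J → ℝ) (xt : EuclideanSpace ℝ (Fin n))
    (hDx : ∀ x ∈ X, ∀ x' ∈ X, ‖x - x'‖ ≤ Dx)
    (hL : 0 ≤ L) (hLip : ∀ x ∈ X, ∀ x' ∈ X, |F x - F x'| ≤ L * ‖x - x'‖)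
    (hxt : xt ∈ X) (hσ : 0 < σ) (hSlater : ∀ j, Q j xt + σ ≤ 0)
    (hγσ : γ < σ / 2)
    (hlam : ∀ j, 0 ≤ lam j)
    (hxγ : xγ ∈ X)
    (hStrong : IsLeast
      {v : ℝ | ∃ x ∈ X, v = F x + ∑ j, lam j * (Q j x + γ)} (F xγ)) :
    ∑ j, lam j ≤ 2 * L * Dx / σ := by
  have hgap : F xt - F xγ ≤ L * Dx :=
    (le_abs_self _).trans <|
      (hLip xt hxt xγ hxγ).trans (mul_le_mul_of_nonneg_left (hDx xt hxt xγ hxγ) hL)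
  calc ∑ j, lam j ≤ L * Dx / (σ / 2) :=
        sum_le_div_of_le_lagrangian (g := fun j x ↦ Q j x + γ) (half_pos hσ) hlam
          (fun j ↦ by linarith [hSlater j]) hgap (hStrong.2 ⟨xt, hxt, rfl⟩)
    _ = 2 * L * Dx / σ := by field_simp

/-- Bound on the sum of optimal dual multipliers of the `γ`-perturbed problem:
under convexity, a Slater point with slack `σ`, compactness (diameter `D_x`),
`L`-Lipschitz continuity of `F` on `X`, `0 < γ < σ/2`, and strong duality for the
perturbed problem, the dual optimal `λ^γ ≥ 0` satisfies `Σ_j λ^γ_j ≤ 2·L·D_x/σ`. -/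
theorem dual_multiplier_sum_bound {n J : ℕ}
    (F : EuclideanSpace ℝ (Fin n) → ℝ) (Q : Fin J → EuclideanSpace ℝ (Fin n) → ℝ)
    (X : Set (EuclideanSpace ℝ (Fin n))) (Dx L σ γ : ℝ)
    (xγ : EuclideanSpace ℝ (Fin n)) (lam : Fin J → ℝ) (xt : EuclideanSpace ℝ (Fin n))
    (hXconv : Convex ℝ X) (hXcomp : IsCompact X)
    (hFconv : ConvexOn ℝ X F) (hQconv : ∀ j, ConvexOn ℝ X (Q j))
    (hDx : ∀ x ∈ X, ∀ x' ∈ X, ‖x - x'‖ ≤ Dx)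
    (hL : 0 ≤ L) (hLip : ∀ x ∈ X, ∀ x' ∈ X, |F x - F x'| ≤ L * ‖x - x'‖)
    (hxt : xt ∈ X) (hσ : 0 < σ) (hSlater : ∀ j, Q j xt + σ ≤ 0)
    (hγ : 0 < γ) (hγσ : γ < σ / 2)
    (hlam : ∀ j, 0 ≤ lam j)
    (hxγ : xγ ∈ X) (hxγfeas : ∀ j, Q j xγ + γ ≤ 0)
    (hStrong : IsLeast
      {v : ℝ | ∃ x ∈ X, v = F x + ∑ j, lam j * (Q j x + γ)} (F xγ)) :
    ∑ j, lam j ≤ 2 * L * Dx / σ :=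
  dual_multiplier_sum_bound_general F Q X Dx L σ γ xγ lam xt hDx hL hLip hxt hσ hSlater hγσ hlam hxγ
    hStrong
end

section
/- Under the hypotheses of the perturbation setting (convex F and Q_j, strictly feasible point with slack σ, strong duality for the γ-perturbed problem, F being L-Lipschitz on a set of diameter D_x, and 0 < γ < σ/2), the optimality gap between the γ-perturbed solution and the original optimum satisfies F(x^γ) − F(x⋆) ≤ 2·L·D_x·γ/σ. -/
/-!
Put `θ = γ / σ ∈ [0, 1]`. By convexity of the constraints, the point `(1 - θ) x⋆ + θ x̃` has slack
`θ σ = γ`, so it is feasible for the perturbed problem, and convexity of `F` gives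
`F(x^γ) - F(x⋆) ≤ θ (F(x̃) - F(x⋆)) ≤ θ L D_x`.
-/

section Perturbation

variable {E ι : Type*} [AddCommGroup E] [Module ℝ E] {X : Set E}

lemma ConvexOn.combo_add_mul_le_zero {g : E → ℝ} (hg : ConvexOn ℝ X g) {x y : E}
    (hx : x ∈ X) (hy : y ∈ X) {σ θ : ℝ} (hgx : g x ≤ 0) (hgy : g y + σ ≤ 0)
    (hθ₀ : 0 ≤ θ) (hθ₁ : θ ≤ 1) :
    g ((1 - θ) • x + θ • y) + θ * σ ≤ 0 := by
  have hcombo := hg.2 hx hy (sub_nonneg.2 hθ₁) hθ₀ (sub_add_cancel 1 θ)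
  simp only [smul_eq_mul] at hcombo
  have hx' : (1 - θ) * g x ≤ 0 := mul_nonpos_of_nonneg_of_nonpos (sub_nonneg.2 hθ₁) hgx
  have hy' : θ * (g y + σ) ≤ 0 := mul_nonpos_of_nonneg_of_nonpos hθ₀ hgy
  linarith

lemma perturbed_min_sub_le_of_slater {F : E → ℝ} {Q : ι → E → ℝ} (hX : Convex ℝ X)
    (hF : ConvexOn ℝ X F) (hQ : ∀ j, ConvexOn ℝ X (Q j)) {x xt xγ : E} {σ γ : ℝ}
    (hx : x ∈ X) (hxfeas : ∀ j, Q j x ≤ 0) (hxt : xt ∈ X) (hSlater : ∀ j, Q j xt + σ ≤ 0)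
    (hσ : 0 < σ) (hγ : 0 ≤ γ) (hγσ : γ ≤ σ)
    (hxγopt : ∀ y ∈ X, (∀ j, Q j y + γ ≤ 0) → F xγ ≤ F y) :
    F xγ - F x ≤ γ / σ * (F xt - F x) := by
  set θ := γ / σ
  have hθ₀ : 0 ≤ θ := div_nonneg hγ hσ.le
  have hθ₁ : θ ≤ 1 := (div_le_one hσ).2 hγσ
  have hθσ : θ * σ = γ := div_mul_cancel₀ γ hσ.ne'
  have hmem : (1 - θ) • x + θ • xt ∈ X := hX hx hxt (sub_nonneg.2 hθ₁) hθ₀ (sub_add_cancel 1 θ)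
  have hfeas : ∀ j, Q j ((1 - θ) • x + θ • xt) + γ ≤ 0 := fun j => hθσ ▸
    (hQ j).combo_add_mul_le_zero hx hxt (hxfeas j) (hSlater j) hθ₀ hθ₁
  have hconv : F ((1 - θ) • x + θ • xt) ≤ (1 - θ) * F x + θ * F xt := by
    simpa only [smul_eq_mul] using hF.2 hx hxt (sub_nonneg.2 hθ₁) hθ₀ (sub_add_cancel 1 θ)
  linarith [hxγopt _ hmem hfeas]

end Perturbation

theorem perturbed_optimality_gap_general {n J : ℕ}
    (F : EuclideanSpace ℝ (Fin n) → ℝ) (Q : Fin J → EuclideanSpace ℝ (Fin n) → ℝ)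
    (X : Set (EuclideanSpace ℝ (Fin n))) (Dx L σ γ : ℝ)
    (xstar xγ : EuclideanSpace ℝ (Fin n)) (xt : EuclideanSpace ℝ (Fin n))
    (hXconv : Convex ℝ X)
    (hFconv : ConvexOn ℝ X F) (hQconv : ∀ j, ConvexOn ℝ X (Q j))
    (hDx : ∀ x ∈ X, ∀ x' ∈ X, ‖x - x'‖ ≤ Dx)
    (hL : 0 ≤ L) (hLip : ∀ x ∈ X, ∀ x' ∈ X, |F x - F x'| ≤ L * ‖x - x'‖)
    (hxt : xt ∈ X) (hσ : 0 < σ) (hSlater : ∀ j, Q j xt + σ ≤ 0)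
    (hγ : 0 < γ) (hγσ : γ < σ / 2)
    (hxstar : xstar ∈ X) (hxstarfeas : ∀ j, Q j xstar ≤ 0)
    (hxγopt : ∀ x ∈ X, (∀ j, Q j x + γ ≤ 0) → F xγ ≤ F x) :
    F xγ - F xstar ≤ 2 * L * Dx * γ / σ := by
  have hgap := perturbed_min_sub_le_of_slater hXconv hFconv hQconv hxstar hxstarfeas hxt
    hSlater hσ hγ.le (by linarith) hxγopt
  have hLDx : F xt - F xstar ≤ L * Dx :=
    (le_abs_self _).trans <| (hLip xt hxt xstar hxstar).trans <|
      mul_le_mul_of_nonneg_left (hDx xt hxt xstar hxstar) hL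
  have hLDx₀ : 0 ≤ L * Dx := mul_nonneg hL (by simpa using hDx xt hxt xt hxt)
  calc F xγ - F xstar ≤ γ / σ * (L * Dx) :=
        hgap.trans (mul_le_mul_of_nonneg_left hLDx (div_nonneg hγ.le hσ.le))
    _ ≤ 2 * L * Dx * γ / σ := by
        rw [div_mul_eq_mul_div, div_le_div_iff_of_pos_right hσ]
        nlinarith

/-- Perturbation bound (Lemma 2 of the paper): under convexity, a Slater point with
slack `σ`, strong duality for the `γ`-perturbed problem, `L`-Lipschitz continuity of
`F` on a set of diameter `D_x`, and `0 < γ < σ/2`, the optimality gap satisfies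
`F(x^γ) − F(x⋆) ≤ 2·L·D_x·γ/σ`. -/
theorem perturbed_optimality_gap {n J : ℕ}
    (F : EuclideanSpace ℝ (Fin n) → ℝ) (Q : Fin J → EuclideanSpace ℝ (Fin n) → ℝ)
    (X : Set (EuclideanSpace ℝ (Fin n))) (Dx L σ γ : ℝ)
    (xstar xγ : EuclideanSpace ℝ (Fin n)) (lam : Fin J → ℝ) (xt : EuclideanSpace ℝ (Fin n))
    (hXconv : Convex ℝ X) (hXcomp : IsCompact X)
    (hFconv : ConvexOn ℝ X F) (hQconv : ∀ j, ConvexOn ℝ X (Q j))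
    (hDx : ∀ x ∈ X, ∀ x' ∈ X, ‖x - x'‖ ≤ Dx)
    (hL : 0 ≤ L) (hLip : ∀ x ∈ X, ∀ x' ∈ X, |F x - F x'| ≤ L * ‖x - x'‖)
    (hxt : xt ∈ X) (hσ : 0 < σ) (hSlater : ∀ j, Q j xt + σ ≤ 0)
    (hγ : 0 < γ) (hγσ : γ < σ / 2)
    (hxstar : xstar ∈ X) (hxstarfeas : ∀ j, Q j xstar ≤ 0)
    (hxstaropt : ∀ x ∈ X, (∀ j, Q j x ≤ 0) → F xstar ≤ F x)
    (hxγ : xγ ∈ X) (hxγfeas : ∀ j, Q j xγ + γ ≤ 0)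
    (hxγopt : ∀ x ∈ X, (∀ j, Q j x + γ ≤ 0) → F xγ ≤ F x)
    (hlam : ∀ j, 0 ≤ lam j)
    (hStrong : IsLeast
      {v : ℝ | ∃ x ∈ X, v = F x + ∑ j, lam j * (Q j x + γ)} (F xγ)) :
    F xγ - F xstar ≤ 2 * L * Dx * γ / σ :=
  perturbed_optimality_gap_general F Q X Dx L σ γ xstar xγ xt hXconv hFconv hQconv hDx hL hLip hxt
    hσ hSlater hγ hγσ hxstar hxstarfeas hxγopt
end
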